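/- The n-th derivative of a composition of an analytic function at a point equals the n-th coefficient (times n!) of the composition of the formal Taylor series: (f∘g)⁽ⁿ⁾(x₀) = n! · [hⁿ] (T_{g(x₀)}f ∘ (T_{x₀}g − g(x₀))), for f, g real-analytic near the relevant points. -/

import Mathlib

/-!
Write `T` for `taylorPS`, `y₀ = g x₀`, `G = T g x₀ - y₀` and `f₁ = dslope f y₀`, so that
`f y = f y₀ + (y - y₀) * f₁ y` with `f₁` again analytic at `y₀`. Since `T` is additive and, by the
Leibniz rule, multiplicative on smooth functions, `T (f ∘ g) x₀ = f y₀ + G * T (f₁ ∘ g) x₀`, and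
(taking `g = id`) `T f y₀ = f y₀ + X * T f₁ y₀`. As `X ∣ G`, induction on `N` gives
`T (f ∘ g) x₀ ≡ ∑ k < N, [Xᵏ] (T f y₀) * Gᵏ (mod X ^ N)`; for `N = n + 1` the `n`-th coefficient of
the right-hand side is that of the formal composition.
-/

open PowerSeries

/-- Composition of formal power series (well defined when the constant term of `G`
is zero): the `n`-th coefficient only depends on the powers `G^k` for `k ≤ n`. -/
noncomputable def formalComp (F G : PowerSeries ℝ) : PowerSeries ℝ :=
  PowerSeries.mk fun n =>
    PowerSeries.coeff n
      (∑ k ∈ Finset.range (n + 1), PowerSeries.C (PowerSeries.coeff k F) * G ^ k)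

/-- Formal Taylor series of `f` at `x₀`. -/
noncomputable def taylorPS (f : ℝ → ℝ) (x₀ : ℝ) : PowerSeries ℝ :=
  PowerSeries.mk fun n => iteratedDeriv n f x₀ / n.factorial

open Finset
open scoped ContDiff

theorem AnalyticAt.dslope {𝕜 E : Type*} [NontriviallyNormedField 𝕜] [NormedAddCommGroup E]
    [NormedSpace 𝕜 E] {f : 𝕜 → E} {a : 𝕜} (hf : AnalyticAt 𝕜 f a) :
    AnalyticAt 𝕜 (dslope f a) a := by
  obtain ⟨p, hp⟩ := hf
  exact ⟨_, hp.has_fpower_series_dslope_fslope⟩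

theorem coeff_zero_taylorPS (f : ℝ → ℝ) (x : ℝ) : coeff 0 (taylorPS f x) = f x := by
  simp [taylorPS]

theorem taylorPS_const_add (c : ℝ) (u : ℝ → ℝ) (x : ℝ) :
    taylorPS (fun y => c + u y) x = C c + taylorPS u x := by
  ext (_ | n)
  · simp [taylorPS]
  · simp [taylorPS, iteratedDeriv_const_add n.succ_pos]

theorem taylorPS_sub_const (u : ℝ → ℝ) (c x : ℝ) :
    taylorPS (fun y => u y - c) x = taylorPS u x - C c := by
  simp only [sub_eq_neg_add, taylorPS_const_add, map_neg]

theorem taylorPS_id (x : ℝ) : taylorPS id x = C x + X := by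
  ext (_ | _ | n) <;> simp [taylorPS, iteratedDeriv_id, coeff_X]

theorem taylorPS_mul {u v : ℝ → ℝ} {x : ℝ} (hu : ContDiffAt ℝ ∞ u x) (hv : ContDiffAt ℝ ∞ v x) :
    taylorPS (fun y => u y * v y) x = taylorPS u x * taylorPS v x := by
  ext n
  simp only [taylorPS, coeff_mk, coeff_mul, Nat.sum_antidiagonal_eq_sum_range_succ
    (fun i j => iteratedDeriv i u x / i.factorial * (iteratedDeriv j v x / j.factorial))]
  rw [iteratedDeriv_fun_mul (hu.of_le (mod_cast le_top)) (hv.of_le (mod_cast le_top)), sum_div]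
  refine sum_congr rfl fun i hi => ?_
  rw [Nat.cast_choose ℝ (Nat.lt_succ_iff.1 (mem_range.1 hi))]
  field_simp

theorem taylorPS_comp_eq_C_add_mul {f g : ℝ → ℝ} {x₀ : ℝ} (hf : AnalyticAt ℝ f (g x₀))
    (hg : ContDiffAt ℝ ∞ g x₀) :
    taylorPS (f ∘ g) x₀ =
      C (f (g x₀)) + (taylorPS g x₀ - C (g x₀)) * taylorPS (dslope f (g x₀) ∘ g) x₀ := by
  have hsplit : f ∘ g = fun x => f (g x₀) + (g x - g x₀) * (dslope f (g x₀) ∘ g) x := by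
    funext x
    simp [← smul_eq_mul, sub_smul_dslope]
  rw [hsplit, taylorPS_const_add,
    taylorPS_mul (hg.sub contDiffAt_const) (hf.dslope.contDiffAt.comp x₀ hg), taylorPS_sub_const]

theorem coeff_succ_taylorPS {f : ℝ → ℝ} {a : ℝ} (hf : AnalyticAt ℝ f a) (k : ℕ) :
    coeff (k + 1) (taylorPS f a) = coeff k (taylorPS (dslope f a) a) := by
  have h := taylorPS_comp_eq_C_add_mul (g := id) hf contDiffAt_id
  rw [Function.comp_id, Function.comp_id, taylorPS_id, id, add_sub_cancel_left] at h
  rw [h, map_add, coeff_C, if_neg k.succ_ne_zero, zero_add, coeff_succ_X_mul]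

theorem X_pow_dvd_taylorPS_comp_sub_sum {g : ℝ → ℝ} {x₀ : ℝ} (hg : ContDiffAt ℝ ∞ g x₀) (N : ℕ)
    {f : ℝ → ℝ} (hf : AnalyticAt ℝ f (g x₀)) :
    X ^ N ∣ taylorPS (f ∘ g) x₀ - ∑ k ∈ range N,
      C (coeff k (taylorPS f (g x₀))) * (taylorPS g x₀ - C (g x₀)) ^ k := by
  set G := taylorPS g x₀ - C (g x₀)
  induction N generalizing f with
  | zero => simp
  | succ N ih =>
    have hG : X ∣ G := X_dvd_iff.2 (by simp [G, taylorPS])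
    have hstep : taylorPS (f ∘ g) x₀ - ∑ k ∈ range (N + 1),
          C (coeff k (taylorPS f (g x₀))) * G ^ k =
        G * (taylorPS (dslope f (g x₀) ∘ g) x₀ - ∑ k ∈ range N,
          C (coeff k (taylorPS (dslope f (g x₀)) (g x₀))) * G ^ k) := by
      simp only [sum_range_succ', coeff_succ_taylorPS hf, coeff_zero_taylorPS, pow_succ',
        mul_left_comm _ G, ← mul_sum, taylorPS_comp_eq_C_add_mul hf hg]
      ring
    rw [hstep, pow_succ']
    exact mul_dvd_mul hG (ih hf.dslope)

/-- The `n`-th derivative of a composition of analytic functions equals `n!` times the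
`n`-th coefficient of the composition of the corresponding formal Taylor series. -/
theorem iteratedDeriv_comp_eq_coeff_formalComp (f g : ℝ → ℝ) (x₀ : ℝ) (n : ℕ)
    (hf : AnalyticAt ℝ f (g x₀)) (hg : AnalyticAt ℝ g x₀) :
    iteratedDeriv n (f ∘ g) x₀ =
      (n.factorial : ℝ) *
        PowerSeries.coeff n
          (formalComp (taylorPS f (g x₀)) (taylorPS g x₀ - PowerSeries.C (g x₀))) := by
  have h := X_pow_dvd_iff.1 (X_pow_dvd_taylorPS_comp_sub_sum hg.contDiffAt (n + 1) hf) n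
    n.lt_succ_self
  rw [map_sub, sub_eq_zero] at h
  rw [formalComp, coeff_mk, ← h, taylorPS, coeff_mk]
  field_simp
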